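/- arXiv:2208.12406 — 7 statements merged into one kernel-verified Lean document; each statement's English description precedes it below -/
import Mathlib

section
/- Let V₁ and V₂ be affine varieties in ℂ^d. If the ideal I(V₁) + I(V₂) is not radical, then there exist polynomials p₁, p₂ ∈ ℂ[x₁,…,x_d] agreeing on V₁ ∩ V₂ for which no polynomial f satisfies f = p₁ on V₁ and f = p₂ on V₂. -/
/-!
Two polynomials admit a common interpolant on `V₁` and `V₂` exactly when their difference lies in
`I(V₁) + I(V₂)`, while they agree on `V₁ ∩ V₂` exactly when their difference lies in `I(V₁ ∩ V₂)`,
a radical ideal containing `I(V₁) + I(V₂)`. So any `g` in the radical of `I(V₁) + I(V₂)` but not in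
`I(V₁) + I(V₂)` itself gives the pair `g, 0` that agree on `V₁ ∩ V₂` but cannot be interpolated.
-/

namespace MvPolynomial

variable {k K σ : Type*} [Field k] [Field K] [Algebra k K]

theorem isRadical_vanishingIdeal (V : Set (σ → K)) : (vanishingIdeal k V).IsRadical :=
  fun p ⟨n, hpn⟩ x hx => eq_zero_of_pow_eq_zero ((map_pow (aeval x) p n).symm.trans (hpn x hx))

theorem radical_sup_vanishingIdeal_le_vanishingIdeal_inter (V₁ V₂ : Set (σ → K)) :
    (vanishingIdeal k V₁ ⊔ vanishingIdeal k V₂).radical ≤ vanishingIdeal k (V₁ ∩ V₂) :=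
  (isRadical_vanishingIdeal _).radical_le_iff.mpr <|
    sup_le (vanishingIdeal_anti_mono Set.inter_subset_left)
      (vanishingIdeal_anti_mono Set.inter_subset_right)

theorem exists_interpolant_iff_sub_mem_sup_vanishingIdeal {V₁ V₂ : Set (σ → k)}
    (p₁ p₂ : MvPolynomial σ k) :
    (∃ f : MvPolynomial σ k,
        (∀ x ∈ V₁, eval x f = eval x p₁) ∧ (∀ x ∈ V₂, eval x f = eval x p₂)) ↔
      p₁ - p₂ ∈ vanishingIdeal k V₁ ⊔ vanishingIdeal k V₂ := by
  constructor
  · rintro ⟨f, hf₁, hf₂⟩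
    have hV₁ : p₁ - f ∈ vanishingIdeal k V₁ := fun x hx => by simp [hf₁ x hx]
    have hV₂ : f - p₂ ∈ vanishingIdeal k V₂ := fun x hx => by simp [hf₂ x hx]
    simpa using Submodule.add_mem_sup hV₁ hV₂
  · intro h
    obtain ⟨a, ha, b, hb, hab⟩ := Submodule.mem_sup.mp h
    refine ⟨p₁ - a, fun x hx => by simpa using ha x hx, fun x hx => ?_⟩
    have hbx : eval x b = 0 := by simpa using hb x hx
    simp [eq_sub_of_add_eq hab, hbx]

end MvPolynomial

open MvPolynomial

theorem no_interpolation_of_nonradical_sum_general {d : ℕ}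
    (V₁ V₂ : Set (Fin d → ℂ))
    (hnonrad : ¬ (vanishingIdeal ℂ V₁ + vanishingIdeal ℂ V₂).IsRadical) :
    ∃ p₁ p₂ : MvPolynomial (Fin d) ℂ,
      (∀ x ∈ V₁ ∩ V₂, eval x p₁ = eval x p₂) ∧
      ¬ ∃ f : MvPolynomial (Fin d) ℂ,
          (∀ x ∈ V₁, eval x f = eval x p₁) ∧ (∀ x ∈ V₂, eval x f = eval x p₂) := by
  obtain ⟨g, hg_rad, hg⟩ := SetLike.not_le_iff_exists.mp hnonrad
  refine ⟨g, 0, fun x hx => ?_, ?_⟩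
  · simpa using radical_sup_vanishingIdeal_le_vanishingIdeal_inter V₁ V₂ hg_rad x hx
  · rwa [exists_interpolant_iff_sub_mem_sup_vanishingIdeal, sub_zero]

theorem no_interpolation_of_nonradical_sum {d : ℕ}
    (V₁ V₂ : Set (Fin d → ℂ))
    (hV₁ : ∃ J : Ideal (MvPolynomial (Fin d) ℂ), V₁ = zeroLocus ℂ J)
    (hV₂ : ∃ J : Ideal (MvPolynomial (Fin d) ℂ), V₂ = zeroLocus ℂ J)
    (hnonrad : ¬ (vanishingIdeal ℂ V₁ + vanishingIdeal ℂ V₂).IsRadical) :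
    ∃ p₁ p₂ : MvPolynomial (Fin d) ℂ,
      (∀ x ∈ V₁ ∩ V₂, eval x p₁ = eval x p₂) ∧
      ¬ ∃ f : MvPolynomial (Fin d) ℂ,
          (∀ x ∈ V₁, eval x f = eval x p₁) ∧ (∀ x ∈ V₂, eval x f = eval x p₂) :=
  no_interpolation_of_nonradical_sum_general V₁ V₂ hnonrad
end

section
/- Let V₁,…,Vₙ be affine varieties in ℂ^d such that for every m < n the ideal I(V₁ ∪ ⋯ ∪ V_m) + I(V_{m+1}) is radical. Then for every collection of polynomials p₁,…,pₙ with p_k = p_j on V_k ∩ V_j for all k, j, there exists a polynomial f such that f = p_k on V_k for k = 1,…,n. -/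
/-!
Over an algebraically closed field, if `W` and `V` are algebraic sets and `I(W) + I(V)` is
radical, the Nullstellensatz gives `I(W ∩ V) = rad (I(W) + I(V)) = I(W) + I(V)`. Hence if `f` and
`g` agree on `W ∩ V`, then `f - g = a + b` with `a ∈ I(W)`, `b ∈ I(V)`, and `f - a = g + b`
equals `f` on `W` and `g` on `V`. Inducting on `n` with `W = V₁ ∪ ⋯ ∪ Vₙ₋₁` (again algebraic)
and `V = Vₙ` extends an interpolant of the first `n - 1` polynomials to all `n`.
-/

open MvPolynomial

namespace MvPolynomial

variable {k K σ : Type*} [Field k] [Field K] [Algebra k K]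

theorem zeroLocus_sup (I J : Ideal (MvPolynomial σ k)) :
    zeroLocus K (I ⊔ J) = zeroLocus K I ∩ zeroLocus K J :=
  zeroLocus_vanishingIdeal_galoisConnection.l_sup

theorem zeroLocus_vanishingIdeal_zeroLocus (I : Ideal (MvPolynomial σ k)) :
    zeroLocus K (vanishingIdeal k (zeroLocus K I)) = zeroLocus K I :=
  zeroLocus_vanishingIdeal_galoisConnection.l_u_l_eq_l I

theorem zeroLocus_iInf {ι : Type*} [Finite ι] (I : ι → Ideal (MvPolynomial σ k)) :
    zeroLocus K (⨅ i, I i) = ⋃ i, zeroLocus K (I i) := by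
  have := Fintype.ofFinite ι
  refine le_antisymm (fun x hx => ?_)
    (Set.iUnion_subset fun i => zeroLocus_anti_mono (iInf_le I i))
  by_contra hx'
  simp only [Set.mem_iUnion, mem_zeroLocus_iff, not_exists, not_forall] at hx'
  choose q hqI hqx using hx'
  have hprod : ∏ i, q i ∈ ⨅ i, I i :=
    Ideal.mem_iInf.2 fun i =>
      Ideal.mem_of_dvd _ (Finset.dvd_prod_of_mem q (Finset.mem_univ i)) (hqI i)
  exact Finset.prod_ne_zero_iff.2 (fun i _ => hqx i) (by simpa using hx _ hprod)

theorem exists_zeroLocus_eq_iUnion {ι : Type*} [Finite ι] {V : ι → Set (σ → K)}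
    (hV : ∀ i, ∃ I : Ideal (MvPolynomial σ k), V i = zeroLocus K I) :
    ∃ I : Ideal (MvPolynomial σ k), ⋃ i, V i = zeroLocus K I := by
  choose I hI using hV
  exact ⟨⨅ i, I i, by simp only [zeroLocus_iInf, hI]⟩

variable [IsAlgClosed K] [Finite σ]

theorem vanishingIdeal_inter_of_isRadical_sup {W V : Set (σ → K)}
    (hW : ∃ I : Ideal (MvPolynomial σ k), W = zeroLocus K I)
    (hV : ∃ J : Ideal (MvPolynomial σ k), V = zeroLocus K J)
    (hrad : (vanishingIdeal k W ⊔ vanishingIdeal k V).IsRadical) :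
    vanishingIdeal k (W ∩ V) = vanishingIdeal k W ⊔ vanishingIdeal k V := by
  obtain ⟨I, rfl⟩ := hW
  obtain ⟨J, rfl⟩ := hV
  have hinter : zeroLocus K I ∩ zeroLocus K J =
      zeroLocus K (vanishingIdeal k (zeroLocus K I) ⊔ vanishingIdeal k (zeroLocus K J)) := by
    rw [zeroLocus_sup, zeroLocus_vanishingIdeal_zeroLocus, zeroLocus_vanishingIdeal_zeroLocus]
  rw [hinter, vanishingIdeal_zeroLocus_eq_radical, hrad.radical]

theorem exists_interpolating_of_isRadical_sup {W V : Set (σ → K)}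
    (hW : ∃ I : Ideal (MvPolynomial σ k), W = zeroLocus K I)
    (hV : ∃ J : Ideal (MvPolynomial σ k), V = zeroLocus K J)
    (hrad : (vanishingIdeal k W ⊔ vanishingIdeal k V).IsRadical) {f g : MvPolynomial σ k}
    (hfg : ∀ x ∈ W ∩ V, aeval x f = aeval x g) :
    ∃ h : MvPolynomial σ k,
      (∀ x ∈ W, aeval x h = aeval x f) ∧ ∀ x ∈ V, aeval x h = aeval x g := by
  have hmem : f - g ∈ vanishingIdeal k W ⊔ vanishingIdeal k V := by
    rw [← vanishingIdeal_inter_of_isRadical_sup hW hV hrad, mem_vanishingIdeal_iff]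
    intro x hx
    rw [map_sub, hfg x hx, sub_self]
  obtain ⟨a, ha, b, hb, hab⟩ := Submodule.mem_sup.1 hmem
  refine ⟨f - a, fun x hx => ?_, fun x hx => ?_⟩
  · rw [map_sub, mem_vanishingIdeal_iff.1 ha x hx, sub_zero]
  · rw [show f - a = g + b by linear_combination -hab, map_add,
      mem_vanishingIdeal_iff.1 hb x hx, add_zero]

end MvPolynomial

theorem Fin.iUnion_lt_castSucc {α : Type*} {n : ℕ} (V : Fin (n + 1) → Set α) (m : Fin n) :
    ⋃ j, ⋃ (_ : j < m.castSucc), V j = ⋃ j : Fin n, ⋃ (_ : j < m), V j.castSucc := by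
  ext x
  simp [Fin.exists_fin_succ', (Fin.castSucc_lt_last m).not_gt]

theorem Fin.iUnion_lt_last {α : Type*} {n : ℕ} (V : Fin (n + 1) → Set α) :
    ⋃ j, ⋃ (_ : j < Fin.last n), V j = ⋃ j : Fin n, V j.castSucc := by
  ext x
  simp [Fin.exists_fin_succ', Fin.castSucc_lt_last]

theorem interpolation_of_nested_radical_sums {d n : ℕ}
    (V : Fin n → Set (Fin d → ℂ))
    (hV : ∀ j, ∃ J : Ideal (MvPolynomial (Fin d) ℂ), V j = zeroLocus ℂ J)
    (hrad : ∀ m : Fin n,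
      (vanishingIdeal ℂ (⋃ j : Fin n, ⋃ (_ : j < m), V j) + vanishingIdeal ℂ (V m)).IsRadical)
    (p : Fin n → MvPolynomial (Fin d) ℂ)
    (hagree : ∀ k j : Fin n, ∀ x ∈ V k ∩ V j, eval x (p k) = eval x (p j)) :
    ∃ f : MvPolynomial (Fin d) ℂ,
      ∀ k, ∀ x ∈ V k, eval x f = eval x (p k) := by
  induction n with
  | zero => exact ⟨0, fun k => k.elim0⟩
  | succ n ih =>
    obtain ⟨f, hf⟩ := ih (fun j => V j.castSucc) (fun j => hV _)
      (fun m => by simpa only [Fin.iUnion_lt_castSucc] using hrad m.castSucc)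
      (fun j => p j.castSucc) (fun k j => hagree _ _)
    obtain ⟨g, hgf, hgp⟩ := exists_interpolating_of_isRadical_sup
      (exists_zeroLocus_eq_iUnion fun j : Fin n => hV j.castSucc) (hV (Fin.last n))
      (by simpa only [Fin.iUnion_lt_last, Ideal.add_eq_sup] using hrad (Fin.last n))
      (f := f) (g := p (Fin.last n)) (by
        rintro x ⟨hx, hxl⟩
        obtain ⟨j, hxj⟩ := Set.mem_iUnion.1 hx
        exact (hf j x hxj).trans (hagree _ _ x ⟨hxj, hxl⟩))
    exact ⟨g, Fin.lastCases hgp fun k x hx => (hgf x (Set.mem_iUnion.2 ⟨k, hx⟩)).trans (hf k x hx)⟩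
end

section
/- Let V₁,…,Vₙ be affine varieties in ℂ^d with vanishing ideals J_i = I(V_i), and let p₁,…,pₙ be polynomials such that for all i, j: p_i − p_j ∈ J_i + ⋂_{k ≠ i} J_k. Then there exists a polynomial f with f = p_i on V_i for all i = 1,…,n. -/
open MvPolynomial

/-- Fixing a base point `i₀`, write `p i - p i₀ = h i + g i` with `h i ∈ I i` and `g i ∈ I k` for
all `k ≠ i`; then `p i₀ + ∑ i, g i` is congruent to `p i₀ + g j ≡ p j` modulo `I j`. -/
theorem Ideal.exists_forall_sub_mem_of_sub_mem_sup_iInf {R ι : Type*} [CommRing R] [Fintype ι]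
    (I : ι → Ideal R) (p : ι → R) (i₀ : ι)
    (hp : ∀ i, p i - p i₀ ∈ I i ⊔ ⨅ k ≠ i, I k) :
    ∃ f, ∀ i, f - p i ∈ I i := by
  classical
  choose h hh g hg hhg using fun i => Submodule.mem_sup.mp (hp i)
  refine ⟨p i₀ + ∑ i, g i, fun j => ?_⟩
  have hg_mem : ∀ i ≠ j, g i ∈ I j := fun i hij =>
    Ideal.mem_iInf.mp (Ideal.mem_iInf.mp (hg i) j) hij.symm
  have hsum : ∑ i ∈ Finset.univ.erase j, g i ∈ I j :=
    Ideal.sum_mem _ fun i hi => hg_mem i (Finset.ne_of_mem_erase hi)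
  have hf : p i₀ + ∑ i, g i - p j = ∑ i ∈ Finset.univ.erase j, g i - h j := by
    rw [← Finset.add_sum_erase _ _ (Finset.mem_univ j)]
    linear_combination hhg j
  rw [hf]
  exact Ideal.sub_mem _ hsum (hh j)

theorem MvPolynomial.eval_eq_of_sub_mem_vanishingIdeal {σ k : Type*} [Field k]
    {V : Set (σ → k)} {f q : MvPolynomial σ k} (hfq : f - q ∈ vanishingIdeal k V) {x : σ → k}
    (hx : x ∈ V) : eval x f = eval x q :=
  sub_eq_zero.mp (by simpa using mem_vanishingIdeal_iff.mp hfq x hx)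

theorem interpolation_of_restricted_data_general {d n : ℕ}
    (V : Fin n → Set (Fin d → ℂ))
    (p : Fin n → MvPolynomial (Fin d) ℂ)
    (hdata : ∀ i j : Fin n,
      p i - p j ∈ vanishingIdeal ℂ (V i) + ⨅ k ∈ {k : Fin n | k ≠ i}, vanishingIdeal ℂ (V k)) :
    ∃ f : MvPolynomial (Fin d) ℂ,
      ∀ i, ∀ x ∈ V i, eval x f = eval x (p i) := by
  rcases isEmpty_or_nonempty (Fin n) with _ | ⟨⟨i₀⟩⟩
  · exact ⟨0, fun i => isEmptyElim i⟩
  obtain ⟨f, hf⟩ := Ideal.exists_forall_sub_mem_of_sub_mem_sup_iInf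
    (fun i => vanishingIdeal ℂ (V i)) p i₀ fun i => hdata i i₀
  exact ⟨f, fun i _ hx => eval_eq_of_sub_mem_vanishingIdeal (hf i) hx⟩

theorem interpolation_of_restricted_data {d n : ℕ}
    (V : Fin n → Set (Fin d → ℂ))
    (hV : ∀ i, ∃ J : Ideal (MvPolynomial (Fin d) ℂ), V i = zeroLocus ℂ J)
    (p : Fin n → MvPolynomial (Fin d) ℂ)
    (hdata : ∀ i j : Fin n,
      p i - p j ∈ vanishingIdeal ℂ (V i) + ⨅ k ∈ {k : Fin n | k ≠ i}, vanishingIdeal ℂ (V k)) :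
    ∃ f : MvPolynomial (Fin d) ℂ,
      ∀ i, ∀ x ∈ V i, eval x f = eval x (p i) :=
  interpolation_of_restricted_data_general V p hdata
end

section
/- In ℂ[x, y, z], let J₁ = ⟨z − x⟩, J₂ = ⟨z − y⟩, J₃ = ⟨x, y⟩. The polynomial f = z satisfies f = x on V(J₁), f = y on V(J₂), f = z on V(J₃); however, z − x ∉ (J₁ ∩ J₂) + J₃ = ⟨x, y, z²⟩. -/
/-!
The primes `z - x` and `z - y` are not associate, so `J₁ ∩ J₂ = ⟨(z - x)(z - y)⟩`, and modulo
`⟨x, y⟩` this generator is `z²`. The substitution `x, y ↦ 0, z ↦ ε` into the dual numbers kills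
`⟨x, y, z²⟩` but sends `z - x` to `ε ≠ 0`.
-/

open MvPolynomial

theorem Ideal.span_singleton_inf_span_singleton_of_prime {R : Type*} [CommSemiring R] {p q : R}
    (hq : Prime q) (hpq : ¬q ∣ p) :
    Ideal.span {p} ⊓ Ideal.span {q} = Ideal.span {p * q} := by
  ext f
  simp only [Ideal.mem_inf, Ideal.mem_span_singleton]
  constructor
  · rintro ⟨⟨a, rfl⟩, hqa⟩
    exact mul_dvd_mul_left p ((hq.dvd_or_dvd hqa).resolve_left hpq)
  · intro h
    exact ⟨(dvd_mul_right p q).trans h, (dvd_mul_left q p).trans h⟩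

theorem Ideal.span_singleton_sup_le_of_sub_mem {R : Type*} [CommRing R] {I : Ideal R} {a b : R}
    (h : a - b ∈ I) : Ideal.span {a} ⊔ I ≤ Ideal.span {b} ⊔ I := by
  refine sup_le (Ideal.span_singleton_le_iff_mem _ |>.2 ?_) le_sup_right
  simpa using Ideal.add_mem _ (Ideal.mem_sup_left (Ideal.mem_span_singleton_self b))
    (Ideal.mem_sup_right h)

theorem Ideal.span_singleton_sup_eq_of_sub_mem {R : Type*} [CommRing R] {I : Ideal R} {a b : R}
    (h : a - b ∈ I) : Ideal.span {a} ⊔ I = Ideal.span {b} ⊔ I :=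
  le_antisymm (span_singleton_sup_le_of_sub_mem h)
    (span_singleton_sup_le_of_sub_mem (by simpa using I.neg_mem h))

namespace MvPolynomial

variable {σ R : Type*} [CommRing R]

theorem prime_X_sub_X [IsDomain R] {i j : σ} (hij : i ≠ j) :
    Prime (X i - X j : MvPolynomial σ R) := by
  classical
  let e : MvPolynomial σ R ≃ₐ[R] MvPolynomial σ R := AlgEquiv.ofAlgHom
    (aeval (Function.update X i (X i - X j))) (aeval (Function.update X i (X i + X j)))
    (algHom_ext fun k ↦ by by_cases hk : k = i <;> simp [hk, hij.symm])
    (algHom_ext fun k ↦ by by_cases hk : k = i <;> simp [hk, hij.symm])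
  have he : e (X i) = X i - X j := by simp [e]
  exact he ▸ (MulEquiv.prime_iff e).2 X_prime

theorem eval_eq_of_mem_zeroLocus_span_sub {k : Type*} [Field k] {p q : MvPolynomial σ k}
    {x : σ → k} (hx : x ∈ zeroLocus k (Ideal.span {p - q})) : eval x p = eval x q :=
  sub_eq_zero.1 (by simpa using hx _ (Ideal.mem_span_singleton_self _))

theorem X_two_sub_X_zero_notMem_span [Nontrivial R] :
    (X 2 - X 0 : MvPolynomial (Fin 3) R) ∉ Ideal.span {X 0, X 1, X 2 ^ 2} := by
  let φ : MvPolynomial (Fin 3) R →ₐ[R] DualNumber R := aeval ![0, 0, DualNumber.eps]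
  have hker : Ideal.span {X 0, X 1, X 2 ^ 2} ≤ RingHom.ker φ := by
    simp [Ideal.span_le, Set.insert_subset_iff, φ, sq]
  intro h
  simpa [φ] using congrArg TrivSqZeroExt.snd (hker h)

end MvPolynomial

theorem sufficient_condition_not_necessary :
    (∀ x ∈ zeroLocus ℂ (Ideal.span {X 2 - X 0} : Ideal (MvPolynomial (Fin 3) ℂ)),
        eval x (X 2 : MvPolynomial (Fin 3) ℂ) = eval x (X 0 : MvPolynomial (Fin 3) ℂ)) ∧
    (∀ x ∈ zeroLocus ℂ (Ideal.span {X 2 - X 1} : Ideal (MvPolynomial (Fin 3) ℂ)),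
        eval x (X 2 : MvPolynomial (Fin 3) ℂ) = eval x (X 1 : MvPolynomial (Fin 3) ℂ)) ∧
    (∀ x ∈ zeroLocus ℂ (Ideal.span {X 0, X 1} : Ideal (MvPolynomial (Fin 3) ℂ)),
        eval x (X 2 : MvPolynomial (Fin 3) ℂ) = eval x (X 2 : MvPolynomial (Fin 3) ℂ)) ∧
    ((Ideal.span {X 2 - X 0} : Ideal (MvPolynomial (Fin 3) ℂ)) ⊓ Ideal.span {X 2 - X 1}) +
        Ideal.span {X 0, X 1} =
      (Ideal.span {X 0, X 1, (X 2) ^ 2} : Ideal (MvPolynomial (Fin 3) ℂ)) ∧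
    (X 2 - X 0 : MvPolynomial (Fin 3) ℂ) ∉
      ((Ideal.span {X 2 - X 0} : Ideal (MvPolynomial (Fin 3) ℂ)) ⊓ Ideal.span {X 2 - X 1}) +
        Ideal.span {X 0, X 1} := by
  have hnot_dvd : ¬(X 2 - X 1 : MvPolynomial (Fin 3) ℂ) ∣ X 2 - X 0 := fun ⟨d, hd⟩ ↦ by
    simpa using congrArg (eval ![1, 0, 0]) hd
  have hinf : (Ideal.span {X 2 - X 0} ⊓ Ideal.span {X 2 - X 1} : Ideal (MvPolynomial (Fin 3) ℂ)) =
      Ideal.span {(X 2 - X 0) * (X 2 - X 1)} :=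
    Ideal.span_singleton_inf_span_singleton_of_prime (prime_X_sub_X (by decide)) hnot_dvd
  have hsum : (Ideal.span {X 2 - X 0} ⊓ Ideal.span {X 2 - X 1} : Ideal (MvPolynomial (Fin 3) ℂ)) +
      Ideal.span {X 0, X 1} = Ideal.span {X 0, X 1, X 2 ^ 2} := by
    rw [hinf, Submodule.add_eq_sup, Ideal.span_singleton_sup_eq_of_sub_mem (b := X 2 ^ 2)
      (Ideal.mem_span_pair.2 ⟨X 1 - X 2, -X 2, by ring⟩), ← Ideal.span_insert]
    congr 1
    ext
    simp only [Set.mem_insert_iff, Set.mem_singleton_iff]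
    tauto
  refine ⟨fun _ ↦ eval_eq_of_mem_zeroLocus_span_sub, fun _ ↦ eval_eq_of_mem_zeroLocus_span_sub,
    fun _ _ ↦ rfl, hsum, ?_⟩
  rw [hsum]
  exact X_two_sub_X_zero_notMem_span
end

section
/- Let L ∈ ℂ[x₁,…,x_d] be a nonzero polynomial whose lowest-degree nonvanishing monomial has degree l, and let L(D) be the corresponding constant-coefficient differential operator. Then L(D) maps the space of polynomials of degree at most n onto the space of polynomials of degree at most n − l. -/
open MvPolynomial

/-- The constant-coefficient differential operator `L(D)` obtained from a polynomial `L`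
by substituting `∂/∂xⱼ` for `xⱼ`. -/
noncomputable def diffOp {d : ℕ} (L : MvPolynomial (Fin d) ℂ) :
    MvPolynomial (Fin d) ℂ →ₗ[ℂ] MvPolynomial (Fin d) ℂ :=
  ∑ α ∈ L.support, L.coeff α •
    ((List.finRange d).map
      (fun j => ((pderiv j).toLinearMap : Module.End ℂ (MvPolynomial (Fin d) ℂ)) ^ (α j))).prod

/-- The lowest-degree non-vanishing monomial of `L` has degree `l`. -/
def lowestDegree {d : ℕ} (L : MvPolynomial (Fin d) ℂ) (l : ℕ) : Prop :=
  (∀ k < l, homogeneousComponent k L = 0) ∧ homogeneousComponent l L ≠ 0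

/-!
Pair polynomials by `⟪q, f⟫ = (q(D) f)(0) = ∑ α! q_α f_α`. Since `q ↦ q(D)` is an algebra map,
`⟪q, L(D) f⟫ = ⟪q L, f⟫`. Coefficients are best computed in the scaled coordinates `γ! f_γ`, in which
`∂ᵢ` is the shift `γ ↦ γ + eᵢ`; hence `L(D)`, whose monomials all have degree `≥ l`, maps degree `≤ n`
into degree `≤ n - l`, and to `0` when `n < l`. The pairing is nondegenerate on polynomials of degree
`≤ n - l`, so surjectivity follows once no nonzero such `q` is orthogonal to the image. The lowest
homogeneous part of `q L` is the product of those of `q` and `L`, hence nonzero of degree `≤ n`, and a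
monomial `x^β` occurring in it gives `⟪q, L(D) x^β⟫ = ⟪q L, x^β⟫ = β! (q L)_β ≠ 0`.
-/

theorem Submodule.eq_top_of_forall_ne_zero_exists_apply_ne_zero {K V : Type*} [Field K]
    [AddCommGroup V] [Module K V] [FiniteDimensional K V] (B : LinearMap.BilinForm K V)
    {P : Submodule K V} (h : ∀ q ≠ 0, ∃ p ∈ P, B q p ≠ 0) : P = ⊤ := by
  have hB : B.Nondegenerate := .ofSeparatingLeft fun q hq => by
    by_contra hq0
    obtain ⟨p, -, hp⟩ := h q hq0
    exact hp (hq p)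
  by_contra hP
  obtain ⟨φ, hφ, hφP⟩ := exists_dual_map_eq_bot_of_lt_top (lt_top_iff_ne_top.mpr hP) inferInstance
  obtain ⟨p, hp, hne⟩ := h ((B.toDual hB).symm φ) (by simpa using hφ)
  rw [LinearMap.BilinForm.apply_toDual_symm_apply] at hne
  exact hne ((Submodule.mem_bot K).mp (hφP ▸ Submodule.mem_map_of_mem hp))

open scoped Nat

theorem Finsupp.prod_factorial_add_single {σ : Type*} [Fintype σ] (γ : σ →₀ ℕ) (i : σ) :
    ∏ j, ((γ + single i 1 : σ →₀ ℕ) j)! = (γ i + 1) * ∏ j, (γ j)! := by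
  classical
  have h (j : σ) : ((γ + single i 1 : σ →₀ ℕ) j)! =
      (if i = j then γ i + 1 else 1) * (γ j)! := by
    rcases eq_or_ne i j with rfl | hij
    · simp [Nat.factorial_succ]
    · simp [single_eq_of_ne hij.symm, hij]
  rw [Finset.prod_congr rfl fun j _ => h j, Finset.prod_mul_distrib, Finset.prod_ite_eq,
    if_pos (Finset.mem_univ i)]

namespace MvPolynomial

variable {σ R : Type*} [CommSemiring R]

theorem pderiv_comm (i j : σ) (f : MvPolynomial σ R) :
    pderiv i (pderiv j f) = pderiv j (pderiv i f) := by
  ext m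
  simp only [coeff_pderiv]
  rw [add_right_comm]
  rcases eq_or_ne i j with rfl | hij
  · rfl
  · rw [Finsupp.add_apply, Finsupp.add_apply, Finsupp.single_eq_of_ne hij,
      Finsupp.single_eq_of_ne hij.symm, add_zero, add_zero]
    ring

theorem commute_pderiv (i j : σ) :
    Commute ((pderiv i).toLinearMap : Module.End R (MvPolynomial σ R)) (pderiv j).toLinearMap :=
  LinearMap.ext (pderiv_comm i j)

theorem pairwise_commute_pderiv_pow (α : σ → ℕ) (s : Set σ) :
    s.Pairwise (Function.onFun Commute
      fun i => ((pderiv i).toLinearMap : Module.End R (MvPolynomial σ R)) ^ α i) :=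
  fun i _ j _ _ => (commute_pderiv i j).pow_pow _ _

theorem mem_restrictTotalDegree_iff_degree_le {p : MvPolynomial σ R} {m : ℕ} :
    p ∈ restrictTotalDegree σ R m ↔ ∀ s ∈ p.support, s.degree ≤ m :=
  Iff.rfl

theorem exists_coeff_mul_ne_zero_of_order_eq [IsDomain R] {q L : MvPolynomial σ R} {l : ℕ}
    (hL : (L : MvPowerSeries σ R).order = l) (hq : q ≠ 0) :
    ∃ β, coeff β (q * L) ≠ 0 ∧ β.degree ≤ q.totalDegree + l := by
  obtain ⟨s, hs⟩ := support_nonempty.mpr hq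
  set m := (q : MvPowerSeries σ R).order.toNat
  have hm : (m : ℕ∞) = (q : MvPowerSeries σ R).order :=
    MvPowerSeries.ne_zero_iff_order_finite.mp (coe_eq_zero_iff.not.mpr hq)
  have hmq : m ≤ q.totalDegree := by
    have := MvPowerSeries.order_le (f := (q : MvPowerSeries σ R)) (d := s)
      (by rwa [coeff_coe, ← mem_support_iff])
    rw [← hm] at this
    exact (Nat.cast_le.mp this).trans (le_totalDegree hs)
  have hqL : ((q * L : MvPolynomial σ R) : MvPowerSeries σ R).order = ↑(m + l) := by
    rw [coe_mul, MvPowerSeries.order_mul, ← hm, hL, Nat.cast_add]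
  obtain ⟨β, hβ, hβdeg⟩ := (MvPowerSeries.order_eq_nat.mp hqL).1
  exact ⟨β, by rwa [coeff_coe] at hβ, by omega⟩

variable [Fintype σ]

noncomputable def pderivPowHom : Multiplicative (σ →₀ ℕ) →* Module.End R (MvPolynomial σ R) where
  toFun α := Finset.univ.noncommProd (fun i => (pderiv i).toLinearMap ^ α.toAdd i)
    (pairwise_commute_pderiv_pow _ _)
  map_one' := by
    simp only [toAdd_one, Finsupp.coe_zero, Pi.zero_apply, pow_zero]
    exact (Finset.noncommProd_eq_pow_card _ _ _ 1 fun _ _ => rfl).trans (one_pow _)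
  map_mul' α β := by
    simp only [toAdd_mul, Finsupp.add_apply, pow_add]
    exact Finset.noncommProd_mul_distrib (fun i => (pderiv i).toLinearMap ^ α.toAdd i)
      (fun i => (pderiv i).toLinearMap ^ β.toAdd i) _ _
      fun i _ j _ _ => (commute_pderiv i j).pow_pow _ _

theorem pderivPowHom_ofAdd (α : σ →₀ ℕ) :
    pderivPowHom (R := R) (Multiplicative.ofAdd α) = Finset.univ.noncommProd
      (fun i => (pderiv i).toLinearMap ^ α i) (pairwise_commute_pderiv_pow _ _) :=
  rfl

noncomputable def diffOpHom : MvPolynomial σ R →ₐ[R] Module.End R (MvPolynomial σ R) :=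
  AddMonoidAlgebra.lift R _ _ pderivPowHom

theorem diffOpHom_monomial (α : σ →₀ ℕ) (c : R) :
    diffOpHom (monomial α c) = c • pderivPowHom (Multiplicative.ofAdd α) :=
  AddMonoidAlgebra.lift_single _ _ _

noncomputable def factorialCoeff (γ : σ →₀ ℕ) : MvPolynomial σ R →ₗ[R] R :=
  (∏ i, ((γ i)! : R)) • lcoeff R γ

theorem factorialCoeff_apply (γ : σ →₀ ℕ) (f : MvPolynomial σ R) :
    factorialCoeff γ f = (∏ i, ((γ i)! : R)) * coeff γ f :=
  rfl

theorem factorialCoeff_pderiv (γ : σ →₀ ℕ) (i : σ) (f : MvPolynomial σ R) :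
    factorialCoeff γ (pderiv i f) = factorialCoeff (γ + Finsupp.single i 1) f := by
  have h : ∏ j, (((γ + Finsupp.single i 1 : σ →₀ ℕ) j)! : R) = (γ i + 1) * ∏ j, ((γ j)! : R) := by
    simpa only [Nat.cast_prod, Nat.cast_mul, Nat.cast_succ] using
      congrArg (Nat.cast (R := R)) (γ.prod_factorial_add_single i)
  rw [factorialCoeff_apply, factorialCoeff_apply, coeff_pderiv, h]
  ring

theorem factorialCoeff_pderiv_pow (γ : σ →₀ ℕ) (i : σ) (k : ℕ) (f : MvPolynomial σ R) :
    factorialCoeff γ ((((pderiv i).toLinearMap : Module.End R (MvPolynomial σ R)) ^ k) f) =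
      factorialCoeff (γ + Finsupp.single i k) f := by
  induction k generalizing γ with
  | zero => simp
  | succ k ih =>
    rw [pow_succ', Module.End.mul_apply, Derivation.coeFn_coe, factorialCoeff_pderiv, ih,
      add_assoc, ← Finsupp.single_add, add_comm 1 k]

theorem factorialCoeff_noncommProd_pderiv_pow (α : σ →₀ ℕ) (s : Finset σ) (γ : σ →₀ ℕ)
    (f : MvPolynomial σ R) :
    factorialCoeff γ ((s.noncommProd (fun i => (pderiv i).toLinearMap ^ α i)
      (pairwise_commute_pderiv_pow α _)) f) =
      factorialCoeff (γ + ∑ i ∈ s, Finsupp.single i (α i)) f := by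
  classical
  induction s using Finset.induction_on generalizing γ with
  | empty => simp
  | insert i s hi ih =>
    rw [Finset.noncommProd_insert_of_notMem _ _ _ _ hi, Module.End.mul_apply,
      factorialCoeff_pderiv_pow, ih, Finset.sum_insert hi, add_assoc]

theorem factorialCoeff_pderivPowHom (γ α : σ →₀ ℕ) (f : MvPolynomial σ R) :
    factorialCoeff γ (pderivPowHom (Multiplicative.ofAdd α) f) = factorialCoeff (γ + α) f := by
  conv_rhs => rw [← Finsupp.univ_sum_single α]
  exact factorialCoeff_noncommProd_pderiv_pow α Finset.univ γ f

theorem factorialCoeff_diffOpHom (γ : σ →₀ ℕ) (p f : MvPolynomial σ R) :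
    factorialCoeff γ (diffOpHom p f) = ∑ α ∈ p.support, coeff α p * factorialCoeff (γ + α) f := by
  conv_lhs => rw [p.as_sum]
  simp only [map_sum, LinearMap.sum_apply, diffOpHom_monomial, LinearMap.smul_apply, map_smul,
    factorialCoeff_pderivPowHom, smul_eq_mul]

noncomputable def apolarPairing : MvPolynomial σ R →ₗ[R] MvPolynomial σ R →ₗ[R] R :=
  diffOpHom.toLinearMap.compr₂ (lcoeff R 0)

theorem apolarPairing_apply (p f : MvPolynomial σ R) :
    apolarPairing p f = coeff 0 (diffOpHom p f) :=
  rfl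

theorem apolarPairing_diffOpHom (q p f : MvPolynomial σ R) :
    apolarPairing q (diffOpHom p f) = apolarPairing (q * p) f := by
  rw [apolarPairing_apply, apolarPairing_apply, map_mul, Module.End.mul_apply]

theorem apolarPairing_monomial (p : MvPolynomial σ R) (β : σ →₀ ℕ) :
    apolarPairing p (monomial β 1) = coeff β p * ∏ i, ((β i)! : R) := by
  classical
  have h := factorialCoeff_diffOpHom 0 p (monomial β 1)
  simp only [factorialCoeff_apply, Finsupp.coe_zero, Pi.zero_apply, Nat.factorial_zero,
    Nat.cast_one, Finset.prod_const_one, one_mul, zero_add] at h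
  rw [apolarPairing_apply, h, Finset.sum_eq_single β
    (fun α _ hne => by rw [coeff_monomial, if_neg hne.symm, mul_zero, mul_zero])
    (fun hβ => by rw [notMem_support_iff.mp hβ, zero_mul]), coeff_monomial, if_pos rfl, mul_one]

section Degree

variable [IsDomain R] [CharZero R]

theorem prod_factorial_ne_zero (γ : σ →₀ ℕ) : ∏ i, ((γ i)! : R) ≠ 0 :=
  Finset.prod_ne_zero_iff.mpr fun _ _ => Nat.cast_ne_zero.mpr (Nat.factorial_ne_zero _)

theorem exists_add_mem_support_of_mem_support_diffOpHom {p f : MvPolynomial σ R} {γ : σ →₀ ℕ}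
    (hγ : γ ∈ (diffOpHom p f).support) : ∃ α ∈ p.support, γ + α ∈ f.support := by
  have h : factorialCoeff γ (diffOpHom p f) ≠ 0 :=
    mul_ne_zero (prod_factorial_ne_zero γ) (mem_support_iff.mp hγ)
  rw [factorialCoeff_diffOpHom] at h
  obtain ⟨α, hα, hne⟩ := Finset.exists_ne_zero_of_sum_ne_zero h
  exact ⟨α, hα, mem_support_iff.mpr (right_ne_zero_of_mul (right_ne_zero_of_mul hne))⟩

theorem degree_add_le_of_mem_support_diffOpHom {p f : MvPolynomial σ R} {l n : ℕ}
    (hp : l ≤ (p : MvPowerSeries σ R).order) (hf : f ∈ restrictTotalDegree σ R n)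
    {γ : σ →₀ ℕ} (hγ : γ ∈ (diffOpHom p f).support) : γ.degree + l ≤ n := by
  obtain ⟨α, hα, hγα⟩ := exists_add_mem_support_of_mem_support_diffOpHom hγ
  have hlα : l ≤ α.degree := by
    have := hp.trans (MvPowerSeries.order_le (by rwa [coeff_coe, ← mem_support_iff]))
    exact_mod_cast this
  calc γ.degree + l ≤ γ.degree + α.degree := Nat.add_le_add_left hlα _
    _ = (γ + α).degree := (map_add _ _ _).symm
    _ ≤ n := mem_restrictTotalDegree_iff_degree_le.mp hf _ hγα

theorem diffOpHom_mem_restrictTotalDegree {p f : MvPolynomial σ R} {l n : ℕ}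
    (hp : l ≤ (p : MvPowerSeries σ R).order) (hf : f ∈ restrictTotalDegree σ R n) :
    diffOpHom p f ∈ restrictTotalDegree σ R (n - l) :=
  mem_restrictTotalDegree_iff_degree_le.mpr fun _ hγ =>
    Nat.le_sub_of_add_le (degree_add_le_of_mem_support_diffOpHom hp hf hγ)

theorem diffOpHom_eq_zero_of_lt {p f : MvPolynomial σ R} {l n : ℕ}
    (hp : l ≤ (p : MvPowerSeries σ R).order) (hf : f ∈ restrictTotalDegree σ R n) (hn : n < l) :
    diffOpHom p f = 0 :=
  support_eq_empty.mp <| Finset.eq_empty_of_forall_notMem fun _ hγ =>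
    absurd (degree_add_le_of_mem_support_diffOpHom hp hf hγ) (by omega)

theorem map_diffOpHom_restrictTotalDegree_of_lt {L : MvPolynomial σ R} {l n : ℕ}
    (hL : l ≤ (L : MvPowerSeries σ R).order) (hn : n < l) :
    (restrictTotalDegree σ R n).map (diffOpHom L) = ⊥ :=
  (Submodule.eq_bot_iff _).mpr fun _ hg => by
    obtain ⟨f, hf, rfl⟩ := Submodule.mem_map.mp hg
    exact diffOpHom_eq_zero_of_lt hL hf hn

end Degree

section Surjectivity

variable {K : Type*} [Field K] [CharZero K]

theorem exists_apolarPairing_diffOpHom_ne_zero {q L : MvPolynomial σ K} {l n : ℕ}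
    (hL : (L : MvPowerSeries σ K).order = l) (hn : l ≤ n)
    (hq : q ∈ restrictTotalDegree σ K (n - l)) (hq0 : q ≠ 0) :
    ∃ f ∈ restrictTotalDegree σ K n, apolarPairing q (diffOpHom L f) ≠ 0 := by
  obtain ⟨β, hβ, hβdeg⟩ := exists_coeff_mul_ne_zero_of_order_eq hL hq0
  refine ⟨monomial β 1, ?_, ?_⟩
  · rw [mem_restrictTotalDegree] at hq ⊢
    exact (totalDegree_monomial_le β 1).trans (show β.degree ≤ n by omega)
  · rw [apolarPairing_diffOpHom, apolarPairing_monomial]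
    exact mul_ne_zero hβ (prod_factorial_ne_zero β)

theorem map_diffOpHom_restrictTotalDegree {L : MvPolynomial σ K} {l n : ℕ}
    (hL : (L : MvPowerSeries σ K).order = l) (hn : l ≤ n) :
    (restrictTotalDegree σ K n).map (diffOpHom L) = restrictTotalDegree σ K (n - l) := by
  set W := restrictTotalDegree σ K (n - l)
  refine le_antisymm (Submodule.map_le_iff_le_comap.mpr fun _ hf =>
    Submodule.mem_comap.mpr (diffOpHom_mem_restrictTotalDegree hL.ge hf)) ?_
  rw [← Submodule.comap_subtype_eq_top]
  refine Submodule.eq_top_of_forall_ne_zero_exists_apply_ne_zero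
    (apolarPairing.domRestrict₁₂ W W) fun q hq0 => ?_
  obtain ⟨f, hf, hne⟩ := exists_apolarPairing_diffOpHom_ne_zero hL hn q.2
    (by simpa using hq0)
  exact ⟨⟨_, diffOpHom_mem_restrictTotalDegree hL.ge hf⟩, ⟨f, hf, rfl⟩, hne⟩

end Surjectivity

end MvPolynomial

theorem diffOp_eq_diffOpHom {d : ℕ} (L : MvPolynomial (Fin d) ℂ) : diffOp L = diffOpHom L := by
  rw [diffOp, diffOpHom, AddMonoidAlgebra.lift_apply]
  refine Finset.sum_congr rfl fun α _ => congrArg _ ?_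
  rw [pderivPowHom_ofAdd, ← Finset.noncommProd_toFinset _ _ (pairwise_commute_pderiv_pow _ _)
    (List.nodup_finRange d)]
  exact Finset.noncommProd_congr (List.toFinset_finRange d) (fun _ _ => rfl) _

theorem order_eq_of_lowestDegree {d : ℕ} {L : MvPolynomial (Fin d) ℂ} {l : ℕ}
    (hL : lowestDegree L l) : (L : MvPowerSeries (Fin d) ℂ).order = l := by
  refine MvPowerSeries.order_eq_nat.mpr ⟨?_, fun α hα => ?_⟩
  · obtain ⟨α, hα⟩ := support_nonempty.mpr hL.2
    have h := mem_support_iff.mp hα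
    rw [coeff_homogeneousComponent] at h
    split_ifs at h with hdeg
    · exact ⟨α, by rwa [coeff_coe], hdeg⟩
    · exact absurd rfl h
  · have := congrArg (coeff α) (hL.1 _ hα)
    rwa [coeff_homogeneousComponent, if_pos rfl, coeff_zero, ← coeff_coe] at this

theorem matsuura_surjectivity_general {d : ℕ} (L : MvPolynomial (Fin d) ℂ) (l : ℕ)
    (hL : lowestDegree L l) :
    (∀ n : ℕ, l ≤ n →
        Submodule.map (diffOp L) (restrictTotalDegree (Fin d) ℂ n) =
          restrictTotalDegree (Fin d) ℂ (n - l)) ∧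
    (∀ n : ℕ, n < l →
        Submodule.map (diffOp L) (restrictTotalDegree (Fin d) ℂ n) = ⊥) := by
  have hord := order_eq_of_lowestDegree hL
  rw [diffOp_eq_diffOpHom]
  exact ⟨fun n hn => map_diffOpHom_restrictTotalDegree hord hn,
    fun n hn => map_diffOpHom_restrictTotalDegree_of_lt hord.ge hn⟩

/-- Matsuura's theorem: `L(D)` maps polynomials of degree at most `n` onto polynomials of
degree at most `n - l` (and onto the zero space when `n < l`). -/
theorem matsuura_surjectivity {d : ℕ} (L : MvPolynomial (Fin d) ℂ) (l : ℕ) (hL0 : L ≠ 0)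
    (hL : lowestDegree L l) :
    (∀ n : ℕ, l ≤ n →
        Submodule.map (diffOp L) (restrictTotalDegree (Fin d) ℂ n) =
          restrictTotalDegree (Fin d) ℂ (n - l)) ∧
    (∀ n : ℕ, n < l →
        Submodule.map (diffOp L) (restrictTotalDegree (Fin d) ℂ n) = ⊥) :=
  matsuura_surjectivity_general L l hL
end

section
/- Let q ∈ ℂ[x₁,…,x_d] have degree l, let J = ⟨q⟩, and let L ∈ ℂ[x₁,…,x_d] have lowest-degree nonvanishing monomial of degree l. If ker L(D) ∩ J = {0}, then ℂ[x₁,…,x_d] = ker L(D) ⊕ J as vector spaces; moreover, for each n the restriction to degree ≤ n gives ℂ_{≤n}[x] = (ker L(D) ∩ ℂ_{≤n}[x]) ⊕ (J ∩ ℂ_{≤n}[x]). -/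
open MvPolynomial

/-!
The operator `L(D)` lowers total degree by at least `l`, so it maps `ℂ_{≤n}[x]` into
`ℂ_{≤n-l}[x]` and kills `ℂ_{≤n}[x]` outright when `n < l`. By rank–nullity its kernel in
`ℂ_{≤n}[x]` therefore has dimension at least `dim ℂ_{≤n}[x] - dim ℂ_{≤n-l}[x]`, while
multiplication by `q` embeds `ℂ_{≤n-l}[x]` into `J ∩ ℂ_{≤n}[x]`. The two dimensions add up
to at least `dim ℂ_{≤n}[x]`, and since the two subspaces meet trivially they span it. Every
polynomial lies in some `ℂ_{≤n}[x]`, so `ker L(D)` and `J` span everything as well.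
Rank–nullity thus replaces the surjectivity of `L(D)` onto `ℂ_{≤n-l}[x]`.
-/

open Module

namespace Submodule

variable {𝕜 V V' : Type*} [Field 𝕜] [AddCommGroup V] [Module 𝕜 V] [AddCommGroup V']
  [Module 𝕜 V']

theorem finrank_le_finrank_add_finrank_ker_inf (T : V →ₗ[𝕜] V') {W : Submodule 𝕜 V}
    {W' : Submodule 𝕜 V'} [FiniteDimensional 𝕜 W] [FiniteDimensional 𝕜 W']
    (hT : W.map T ≤ W') :
    finrank 𝕜 W ≤ finrank 𝕜 W' + finrank 𝕜 ↥(LinearMap.ker T ⊓ W) := by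
  have hker : finrank 𝕜 (LinearMap.ker (T.domRestrict W)) =
      finrank 𝕜 ↥(LinearMap.ker T ⊓ W) := by
    rw [LinearMap.ker_domRestrict, ← finrank_map_subtype_eq, map_comap_subtype, inf_comm]
  have hrange : finrank 𝕜 (LinearMap.range (T.domRestrict W)) ≤ finrank 𝕜 W' := by
    rw [LinearMap.range_domRestrict]
    exact finrank_mono hT
  have := LinearMap.finrank_range_add_finrank_ker (T.domRestrict W)
  omega

theorem inf_sup_inf_eq_of_finrank_le {K J W : Submodule 𝕜 V} [FiniteDimensional 𝕜 W]
    (hKJ : Disjoint K J) (hW : finrank 𝕜 W ≤ finrank 𝕜 ↥(K ⊓ W) + finrank 𝕜 ↥(J ⊓ W)) :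
    (K ⊓ W) ⊔ (J ⊓ W) = W := by
  have : FiniteDimensional 𝕜 ↥(K ⊓ W) := finiteDimensional_of_le inf_le_right
  have : FiniteDimensional 𝕜 ↥(J ⊓ W) := finiteDimensional_of_le inf_le_right
  have hsum := finrank_sup_add_finrank_inf_eq (K ⊓ W) (J ⊓ W)
  rw [(hKJ.mono inf_le_left inf_le_left).eq_bot, finrank_bot, add_zero] at hsum
  exact eq_of_le_of_finrank_le (sup_le inf_le_right inf_le_right) (hsum ▸ hW)

end Submodule

namespace MvPolynomial

variable {σ R : Type*} [CommSemiring R]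

/-- `T f = 0` is a separate alternative because `totalDegree 0 = 0`. -/
def LowersTotalDegree (T : Module.End R (MvPolynomial σ R)) (k : ℕ) : Prop :=
  ∀ f, T f = 0 ∨ (T f).totalDegree + k ≤ f.totalDegree

namespace LowersTotalDegree

variable {T S : Module.End R (MvPolynomial σ R)} {k m : ℕ}

theorem mono (hT : LowersTotalDegree T k) (hmk : m ≤ k) : LowersTotalDegree T m :=
  fun f => (hT f).imp_right fun h => by omega

theorem zero : LowersTotalDegree (0 : Module.End R (MvPolynomial σ R)) k :=
  fun _ => Or.inl rfl

theorem one : LowersTotalDegree (1 : Module.End R (MvPolynomial σ R)) 0 :=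
  fun _ => Or.inr le_rfl

theorem mul (hT : LowersTotalDegree T k) (hS : LowersTotalDegree S m) :
    LowersTotalDegree (T * S) (k + m) := by
  intro f
  rcases hS f with hSf | hSf
  · left
    simp [hSf]
  rcases hT (S f) with hTSf | hTSf
  · exact Or.inl hTSf
  right
  simp only [Module.End.mul_apply]
  omega

theorem pow (hT : LowersTotalDegree T k) (n : ℕ) : LowersTotalDegree (T ^ n) (n * k) := by
  induction n with
  | zero => simpa using one
  | succ n ih => simpa [pow_succ, add_mul, add_comm] using ih.mul hT

theorem list_prod {ι : Type*} {g : ι → Module.End R (MvPolynomial σ R)} {w : ι → ℕ}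
    (hg : ∀ i, LowersTotalDegree (g i) (w i)) (s : List ι) :
    LowersTotalDegree (s.map g).prod (s.map w).sum := by
  induction s with
  | nil => exact one
  | cons i s ih => simpa using (hg i).mul ih

theorem add (hT : LowersTotalDegree T k) (hS : LowersTotalDegree S k) :
    LowersTotalDegree (T + S) k := by
  intro f
  rcases hT f with hTf | hTf
  · simpa [hTf] using hS f
  rcases hS f with hSf | hSf
  · simpa [hSf] using hT f
  right
  have := totalDegree_add (T f) (S f)
  simp only [LinearMap.add_apply]
  omega

theorem sum {ι : Type*} {T : ι → Module.End R (MvPolynomial σ R)} {s : Finset ι}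
    (hT : ∀ i ∈ s, LowersTotalDegree (T i) k) : LowersTotalDegree (∑ i ∈ s, T i) k :=
  Finset.sum_induction _ (LowersTotalDegree · k) (fun _ _ => add) zero hT

theorem smul (hT : LowersTotalDegree T k) (c : R) : LowersTotalDegree (c • T) k := by
  intro f
  rcases hT f with hTf | hTf
  · left
    simp [hTf]
  right
  have := totalDegree_smul_le c (T f)
  simp only [LinearMap.smul_apply]
  omega

theorem apply_eq_zero (hT : LowersTotalDegree T k) {f : MvPolynomial σ R}
    (hf : f.totalDegree < k) : T f = 0 :=
  (hT f).resolve_right (by omega)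

theorem mem_restrictTotalDegree (hT : LowersTotalDegree T k) {f : MvPolynomial σ R} {n : ℕ}
    (hf : f ∈ restrictTotalDegree σ R n) : T f ∈ restrictTotalDegree σ R (n - k) := by
  rw [MvPolynomial.mem_restrictTotalDegree] at hf ⊢
  rcases hT f with hTf | hTf
  · simp [hTf]
  · omega

end LowersTotalDegree

theorem lowersTotalDegree_pderiv (i : σ) :
    LowersTotalDegree (pderiv i : Derivation R (MvPolynomial σ R) _).toLinearMap 1 := by
  intro f
  rcases Nat.eq_zero_or_pos f.totalDegree with hf | hf
  · left
    rw [totalDegree_eq_zero_iff_eq_C.mp hf]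
    exact pderiv_C
  right
  suffices (pderiv i f).totalDegree ≤ f.totalDegree - 1 by
    rw [Derivation.coeFn_coe]
    omega
  conv_lhs => rw [← f.sum_homogeneousComponent]
  rw [map_sum]
  refine (totalDegree_finsetSum _ _).trans (Finset.sup_le fun j hj => ?_)
  refine (homogeneousComponent_isHomogeneous j f).pderiv.totalDegree_le.trans ?_
  rw [Finset.mem_range] at hj
  omega

theorem le_degree_of_mem_support {L : MvPolynomial σ R} {l : ℕ}
    (hL : ∀ k < l, homogeneousComponent k L = 0) {α : σ →₀ ℕ} (hα : α ∈ L.support) :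
    l ≤ α.degree := by
  by_contra! h
  have := congrArg (coeff α) (hL _ h)
  rw [coeff_homogeneousComponent, if_pos rfl, coeff_zero] at this
  exact mem_support_iff.mp hα this

theorem finrank_restrictTotalDegree_le_finrank_span_inf {𝕜 : Type*} [Field 𝕜] [Finite σ]
    {q : MvPolynomial σ 𝕜} (hq : q ≠ 0) (m : ℕ) :
    finrank 𝕜 (restrictTotalDegree σ 𝕜 m) ≤ finrank 𝕜
      ↥((Ideal.span {q}).restrictScalars 𝕜 ⊓ restrictTotalDegree σ 𝕜 (q.totalDegree + m)) := by
  have : FiniteDimensional 𝕜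
      ↥((Ideal.span {q}).restrictScalars 𝕜 ⊓ restrictTotalDegree σ 𝕜 (q.totalDegree + m)) :=
    Submodule.finiteDimensional_of_le inf_le_right
  have hinj : Function.Injective (LinearMap.mulLeft 𝕜 q) := mul_right_injective₀ hq
  calc finrank 𝕜 (restrictTotalDegree σ 𝕜 m)
      = finrank 𝕜 ((restrictTotalDegree σ 𝕜 m).map (LinearMap.mulLeft 𝕜 q)) :=
        (Submodule.equivMapOfInjective _ hinj _).finrank_eq
    _ ≤ _ := by
        refine Submodule.finrank_mono ?_
        rintro _ ⟨f, hf, rfl⟩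
        refine ⟨Ideal.mem_span_singleton.mpr (dvd_mul_right q f), ?_⟩
        rw [SetLike.mem_coe, MvPolynomial.mem_restrictTotalDegree] at hf ⊢
        have := totalDegree_mul q f
        simp only [LinearMap.mulLeft_apply]
        omega

theorem codisjoint_of_inf_restrictTotalDegree_sup_eq {K J : Submodule R (MvPolynomial σ R)}
    (h : ∀ n, (K ⊓ restrictTotalDegree σ R n) ⊔ (J ⊓ restrictTotalDegree σ R n) =
      restrictTotalDegree σ R n) :
    Codisjoint K J := by
  rw [codisjoint_iff_le_sup]
  intro f _
  have hf : f ∈ restrictTotalDegree σ R f.totalDegree :=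
    (MvPolynomial.mem_restrictTotalDegree _ _ _).mpr le_rfl
  rw [← h] at hf
  exact (sup_le_sup inf_le_left inf_le_left : _ ≤ K ⊔ J) hf

end MvPolynomial

theorem lowersTotalDegree_diffOp {d l : ℕ} {L : MvPolynomial (Fin d) ℂ}
    (hL : ∀ k < l, homogeneousComponent k L = 0) : LowersTotalDegree (diffOp L) l := by
  refine LowersTotalDegree.sum fun α hα => LowersTotalDegree.smul ?_ _
  refine (LowersTotalDegree.list_prod (fun j => (lowersTotalDegree_pderiv j).pow (α j)) _).mono ?_
  simpa [← Fin.sum_univ_def, Finsupp.degree_eq_sum] using le_degree_of_mem_support hL hα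

theorem inf_ker_diffOp_sup_inf_span_eq {d : ℕ} {q L : MvPolynomial (Fin d) ℂ} (hq : q ≠ 0)
    (hL : ∀ k < q.totalDegree, homogeneousComponent k L = 0)
    (hdisj : Disjoint (LinearMap.ker (diffOp L)) ((Ideal.span {q}).restrictScalars ℂ)) (n : ℕ) :
    (LinearMap.ker (diffOp L) ⊓ restrictTotalDegree (Fin d) ℂ n) ⊔
        ((Ideal.span {q}).restrictScalars ℂ ⊓ restrictTotalDegree (Fin d) ℂ n) =
      restrictTotalDegree (Fin d) ℂ n := by
  have hD := lowersTotalDegree_diffOp hL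
  rcases lt_or_ge n q.totalDegree with hn | hn
  · have hker : restrictTotalDegree (Fin d) ℂ n ≤ LinearMap.ker (diffOp L) := fun f hf =>
      hD.apply_eq_zero (((mem_restrictTotalDegree _ _ _).mp hf).trans_lt hn)
    rw [inf_eq_right.mpr hker]
    exact sup_eq_left.mpr inf_le_right
  obtain ⟨m, rfl⟩ := Nat.exists_eq_add_of_le hn
  refine Submodule.inf_sup_inf_eq_of_finrank_le hdisj ?_
  calc finrank ℂ (restrictTotalDegree (Fin d) ℂ (q.totalDegree + m))
      ≤ finrank ℂ (restrictTotalDegree (Fin d) ℂ m) +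
          finrank ℂ ↥(LinearMap.ker (diffOp L) ⊓ restrictTotalDegree (Fin d) ℂ _) := by
        refine Submodule.finrank_le_finrank_add_finrank_ker_inf _ ?_
        rintro _ ⟨f, hf, rfl⟩
        simpa using hD.mem_restrictTotalDegree hf
    _ ≤ _ := by
        rw [add_comm]
        exact Nat.add_le_add_left (finrank_restrictTotalDegree_le_finrank_span_inf hq m) _
theorem kernel_ideal_direct_sum {d l : ℕ} (q : MvPolynomial (Fin d) ℂ) (hq0 : q ≠ 0)
    (hqdeg : q.totalDegree = l)
    (L : MvPolynomial (Fin d) ℂ) (hL : lowestDegree L l)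
    (hker : ∀ f : MvPolynomial (Fin d) ℂ, diffOp L f = 0 → f ∈ Ideal.span {q} → f = 0) :
    IsCompl (LinearMap.ker (diffOp L)) ((Ideal.span {q}).restrictScalars ℂ) ∧
    ∀ n : ℕ,
      (LinearMap.ker (diffOp L) ⊓ restrictTotalDegree (Fin d) ℂ n) ⊔
          ((Ideal.span {q}).restrictScalars ℂ ⊓ restrictTotalDegree (Fin d) ℂ n) =
        restrictTotalDegree (Fin d) ℂ n ∧
      Disjoint (LinearMap.ker (diffOp L) ⊓ restrictTotalDegree (Fin d) ℂ n)
        ((Ideal.span {q}).restrictScalars ℂ ⊓ restrictTotalDegree (Fin d) ℂ n) := by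
  subst hqdeg
  have hdisj : Disjoint (LinearMap.ker (diffOp L)) ((Ideal.span {q}).restrictScalars ℂ) :=
    Submodule.disjoint_def.mpr hker
  have hsup := inf_ker_diffOp_sup_inf_span_eq hq0 hL.1 hdisj
  exact ⟨⟨hdisj, codisjoint_of_inf_restrictTotalDegree_sup_eq hsup⟩,
    fun n => ⟨hsup n, hdisj.mono inf_le_left inf_le_left⟩⟩
end

section
/- For every nonzero homogeneous polynomial L ∈ ℂ[x₁,…,x_d], the space of polynomial solutions of L̄(D)f = 0 has a complement in ℂ[x₁,…,x_d] which is an ideal: namely, any principal ideal ⟨q⟩ where q has leading form q^∧ = L. In particular, the space of harmonic polynomials in d variables is complemented by the ideal ⟨x₁² + ⋯ + x_d²⟩. -/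
/-!
The Fischer form `⟨f, g⟩ = coeff 0 (ḡ(D) f) = ∑ α! f_α ḡ_α` is positive definite, and `ḡ(D)` is
adjoint to multiplication by `g`: `⟨f, g h⟩ = ⟨ḡ(D) f, h⟩`. Hence `L̄(D) (L h) ≠ 0` for `h ≠ 0`.
As `L̄(D)` lowers degrees by exactly `l`, the top homogeneous component of `L̄(D) (q c)` is
`L̄(D) (L c^∧)`, so `q c ∈ ker L̄(D)` forces `c = 0`. Thus `c ↦ L̄(D) (q c)` is an injective,
hence surjective, endomorphism of the finite-dimensional space of polynomials of degree `≤ deg f`,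
and choosing `c` with `L̄(D) (q c) = L̄(D) f` splits `f = (f - q c) + q c`.
-/

open MvPolynomial

/-- The polynomial with complex-conjugated coefficients. -/
noncomputable def conjPoly {d : ℕ} (L : MvPolynomial (Fin d) ℂ) : MvPolynomial (Fin d) ℂ :=
  MvPolynomial.map (starRingEnd ℂ) L

/-- The Fischer (apolar) pairing `⟨f, L⟩ = L̄(D) f`. -/
noncomputable def fischer {d : ℕ} (f L : MvPolynomial (Fin d) ℂ) : MvPolynomial (Fin d) ℂ :=
  diffOp (conjPoly L) f

section HomogeneousComponents

variable {σ R : Type*} [CommSemiring R]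

lemma homogeneousComponent_monomial (k : ℕ) (β : σ →₀ ℕ) (c : R) :
    homogeneousComponent k (monomial β c) = if k = β.degree then monomial β c else 0 :=
  homogeneousComponent_of_mem (isHomogeneous_monomial c rfl)

lemma totalDegree_le_of_homogeneousComponent_eq_zero {p : MvPolynomial σ R} {n : ℕ}
    (h : ∀ k, n < k → homogeneousComponent k p = 0) : p.totalDegree ≤ n := by
  refine Finset.sup_le fun γ hγ => not_lt.mp fun hlt => mem_support_iff.mp hγ ?_
  have hcoeff := congrArg (coeff γ) (h γ.degree hlt)
  rwa [coeff_homogeneousComponent, if_pos rfl, coeff_zero] at hcoeff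

lemma homogeneousComponent_totalDegree_ne_zero {p : MvPolynomial σ R} (hp : p ≠ 0) :
    homogeneousComponent p.totalDegree p ≠ 0 := by
  obtain ⟨γ, hγ, hdeg⟩ := Finset.exists_mem_eq_sup p.support (support_nonempty.mpr hp)
    fun s => s.sum fun _ e => e
  intro h
  have hcoeff := congrArg (coeff γ) h
  rw [coeff_homogeneousComponent, if_pos (show γ.degree = p.totalDegree from hdeg.symm),
    coeff_zero] at hcoeff
  exact mem_support_iff.mp hγ hcoeff

lemma homogeneousComponent_add_mul_of_totalDegree_le {p q : MvPolynomial σ R} {m n : ℕ}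
    (hp : p.totalDegree ≤ m) (hq : q.totalDegree ≤ n) :
    homogeneousComponent (m + n) (p * q)
      = homogeneousComponent m p * homogeneousComponent n q := by
  classical
  ext γ
  by_cases hγ : γ.degree = m + n
  · rw [coeff_homogeneousComponent, if_pos hγ, coeff_mul, coeff_mul]
    refine Finset.sum_congr rfl fun ⟨u, v⟩ huv => ?_
    dsimp only
    have hdeg : u.degree + v.degree = m + n := by
      rw [← map_add, Finset.HasAntidiagonal.mem_antidiagonal.mp huv, hγ]
    rw [coeff_homogeneousComponent, coeff_homogeneousComponent]
    by_cases hu : u.degree ≤ m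
    · by_cases hv : v.degree ≤ n
      · rw [if_pos (by omega), if_pos (by omega)]
      · rw [coeff_eq_zero_of_totalDegree_lt (lt_of_le_of_lt hq (not_le.mp hv)), ite_self,
          mul_zero, mul_zero]
    · rw [coeff_eq_zero_of_totalDegree_lt (lt_of_le_of_lt hp (not_le.mp hu)), ite_self,
        zero_mul, zero_mul]
  · rw [coeff_homogeneousComponent, if_neg hγ, ((homogeneousComponent_isHomogeneous m p).mul
      (homogeneousComponent_isHomogeneous n q)).coeff_eq_zero hγ]

lemma totalDegree_eq_of_homogeneousComponent_totalDegree_eq {p L : MvPolynomial σ R} {l : ℕ}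
    (hL0 : L ≠ 0) (hL : L.IsHomogeneous l) (hp : homogeneousComponent p.totalDegree p = L) :
    p.totalDegree = l :=
  (hp ▸ homogeneousComponent_isHomogeneous _ _).inj_right hL hL0

end HomogeneousComponents

section PartialDerivatives

variable {R : Type*} [CommSemiring R]

lemma pow_pderiv_monomial {σ : Type*} (j : σ) (k : ℕ) (β : σ →₀ ℕ) (c : R) :
    ((pderiv j).toLinearMap ^ k : Module.End R (MvPolynomial σ R)) (monomial β c)
      = monomial (β - Finsupp.single j k) (c * (β j).descFactorial k) := by
  induction k with
  | zero => simp
  | succ k ih =>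
    rw [pow_succ', Module.End.mul_apply, ih, Derivation.coeFn_coe,
      pderiv_monomial, tsub_tsub, ← Finsupp.single_add, Finsupp.tsub_apply,
      Finsupp.single_eq_same, Nat.descFactorial_succ, Nat.cast_mul,
      mul_comm ((β j - k : ℕ) : R), mul_assoc]

lemma list_prod_pow_pderiv_monomial {σ : Type*} [DecidableEq σ] (α β : σ →₀ ℕ) (c : R)
    {t : List σ} (ht : t.Nodup) :
    (t.map fun j => ((pderiv j).toLinearMap ^ α j : Module.End R (MvPolynomial σ R))).prod
        (monomial β c)
      = monomial (β - ∑ i ∈ t.toFinset, Finsupp.single i (α i))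
          (c * ∏ i ∈ t.toFinset, ((β i).descFactorial (α i) : R)) := by
  induction t with
  | nil => simp
  | cons j t ih =>
    obtain ⟨hj, ht⟩ := List.nodup_cons.mp ht
    have hβj : (β - ∑ i ∈ t.toFinset, Finsupp.single i (α i)) j = β j := by
      simp [Finsupp.single_apply, List.mem_toFinset, hj]
    rw [List.map_cons, List.prod_cons, Module.End.mul_apply, ih ht, pow_pderiv_monomial, hβj,
      List.toFinset_cons, Finset.sum_insert (mt List.mem_toFinset.mp hj),
      Finset.prod_insert (mt List.mem_toFinset.mp hj), tsub_tsub, add_comm, mul_assoc,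
      mul_comm (∏ i ∈ _, _)]

variable {d : ℕ}

noncomputable def pderivPow (α : Fin d →₀ ℕ) : Module.End R (MvPolynomial (Fin d) R) :=
  ((List.finRange d).map fun j => (pderiv j).toLinearMap ^ α j).prod

lemma pderivPow_monomial (α β : Fin d →₀ ℕ) (c : R) :
    pderivPow α (monomial β c)
      = monomial (β - α) (c * ∏ j, ((β j).descFactorial (α j) : R)) := by
  rw [pderivPow, list_prod_pow_pderiv_monomial α β c (List.nodup_finRange d),
    List.toFinset_finRange, ← Finsupp.univ_sum_single α]
  simp

lemma pderivPow_monomial_of_not_le {α β : Fin d →₀ ℕ} (h : ¬ α ≤ β) (c : R) :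
    pderivPow α (monomial β c) = 0 := by
  obtain ⟨j, hj⟩ : ∃ j, β j < α j := by simpa [Finsupp.le_def] using h
  rw [pderivPow_monomial, Finset.prod_eq_zero (Finset.mem_univ j)
    (by rw [Nat.descFactorial_eq_zero_iff_lt.mpr hj, Nat.cast_zero]), mul_zero, monomial_zero]

lemma pderivPow_add (α β : Fin d →₀ ℕ) :
    (pderivPow (α + β) : Module.End R (MvPolynomial (Fin d) R))
      = pderivPow α * pderivPow β := by
  refine MvPolynomial.linearMap_ext fun γ => LinearMap.ext fun c => ?_
  simp only [LinearMap.comp_apply, Module.End.mul_apply, pderivPow_monomial, tsub_tsub,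
    add_comm β α, mul_assoc, ← Finset.prod_mul_distrib, ← Nat.cast_mul, Finsupp.add_apply,
    Finsupp.tsub_apply]
  congr 2
  refine Finset.prod_congr rfl fun j _ => ?_
  have h := Nat.descFactorial_mul_descFactorial (n := γ j) (Nat.le_add_left (β j) (α j))
  rw [Nat.add_sub_cancel] at h
  rw [mul_comm, h]

lemma coeff_zero_pderivPow (α : Fin d →₀ ℕ) (f : MvPolynomial (Fin d) R) :
    coeff 0 (pderivPow α f) = coeff α f * ∏ j, ((α j).factorial : R) := by
  induction f using MvPolynomial.induction_on' with
  | add p q hp hq => rw [map_add, coeff_add, coeff_add, hp, hq, add_mul]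
  | monomial β c =>
    by_cases hβα : β = α
    · subst hβα
      rw [pderivPow_monomial, tsub_self, coeff_monomial, if_pos rfl, coeff_monomial, if_pos rfl]
      simp only [Nat.descFactorial_self]
    · by_cases hαβ : α ≤ β
      · rw [pderivPow_monomial, coeff_monomial, coeff_monomial, if_neg hβα, zero_mul,
          if_neg (fun h => hβα (le_antisymm (tsub_eq_zero_iff_le.mp h) hαβ))]
      · rw [pderivPow_monomial_of_not_le hαβ, coeff_zero, coeff_monomial, if_neg hβα, zero_mul]

lemma homogeneousComponent_pderivPow (k : ℕ) (α : Fin d →₀ ℕ) (f : MvPolynomial (Fin d) R) :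
    homogeneousComponent k (pderivPow α f)
      = pderivPow α (homogeneousComponent (k + α.degree) f) := by
  induction f using MvPolynomial.induction_on' with
  | add p q hp hq => rw [map_add, map_add, hp, hq, map_add, map_add]
  | monomial β c =>
    rw [homogeneousComponent_monomial]
    by_cases hαβ : α ≤ β
    · have hdeg : β.degree = (β - α).degree + α.degree := by
        rw [← map_add, tsub_add_cancel_of_le hαβ]
      rw [pderivPow_monomial, homogeneousComponent_monomial, hdeg, ← pderivPow_monomial,
        apply_ite (pderivPow α), map_zero]
      simp only [add_left_inj]
    · rw [pderivPow_monomial_of_not_le hαβ, map_zero, apply_ite (pderivPow α),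
        pderivPow_monomial_of_not_le hαβ, map_zero, ite_self]

end PartialDerivatives

section DifferentialOperators

variable {d : ℕ}

lemma diffOp_eq_sum_of_support_subset (L : MvPolynomial (Fin d) ℂ)
    {s : Finset (Fin d →₀ ℕ)} (hs : L.support ⊆ s) :
    diffOp L = ∑ α ∈ s, L.coeff α • pderivPow α :=
  Finset.sum_subset hs fun α _ hα => by rw [notMem_support_iff.mp hα, zero_smul]

lemma diffOp_zero : diffOp (0 : MvPolynomial (Fin d) ℂ) = 0 := by
  simp [diffOp]

lemma diffOp_monomial (β : Fin d →₀ ℕ) (c : ℂ) : diffOp (monomial β c) = c • pderivPow β := by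
  rw [diffOp_eq_sum_of_support_subset _ support_monomial_subset, Finset.sum_singleton,
    coeff_monomial, if_pos rfl]

lemma diffOp_add (P Q : MvPolynomial (Fin d) ℂ) : diffOp (P + Q) = diffOp P + diffOp Q := by
  rw [diffOp_eq_sum_of_support_subset P (Finset.subset_union_left (s₂ := Q.support)),
    diffOp_eq_sum_of_support_subset Q (Finset.subset_union_right (s₁ := P.support)),
    diffOp_eq_sum_of_support_subset (P + Q) support_add, ← Finset.sum_add_distrib]
  simp only [coeff_add, add_smul]

lemma diffOp_mul (P Q : MvPolynomial (Fin d) ℂ) : diffOp (P * Q) = diffOp P * diffOp Q := by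
  induction P using MvPolynomial.induction_on' with
  | add p q hp hq => rw [add_mul, diffOp_add, diffOp_add, hp, hq, add_mul]
  | monomial α a =>
    induction Q using MvPolynomial.induction_on' with
    | add p q hp hq => rw [mul_add, diffOp_add, diffOp_add, hp, hq, mul_add]
    | monomial β b =>
      rw [monomial_mul, diffOp_monomial, diffOp_monomial, diffOp_monomial, pderivPow_add,
        smul_mul_smul_comm]

lemma homogeneousComponent_diffOp {L : MvPolynomial (Fin d) ℂ} {l : ℕ}
    (hL : L.IsHomogeneous l) (k : ℕ) (f : MvPolynomial (Fin d) ℂ) :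
    homogeneousComponent k (diffOp L f) = diffOp L (homogeneousComponent (k + l) f) := by
  rw [diffOp_eq_sum_of_support_subset L subset_rfl]
  simp only [LinearMap.sum_apply, LinearMap.smul_apply, map_sum, map_smul]
  refine Finset.sum_congr rfl fun α hα => ?_
  rw [homogeneousComponent_pderivPow,
    show α.degree = l from (hL.degree_eq_sum_deg_support hα).symm]

lemma totalDegree_diffOp_le {L f : MvPolynomial (Fin d) ℂ} {l n : ℕ} (hL : L.IsHomogeneous l)
    (hf : f.totalDegree ≤ n + l) : (diffOp L f).totalDegree ≤ n :=
  totalDegree_le_of_homogeneousComponent_eq_zero fun k hk => by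
    rw [homogeneousComponent_diffOp hL, homogeneousComponent_eq_zero _ _ (by omega), map_zero]

end DifferentialOperators

section Fischer

variable {d : ℕ}

lemma MvPolynomial.IsHomogeneous.conjPoly {L : MvPolynomial (Fin d) ℂ} {l : ℕ}
    (hL : L.IsHomogeneous l) :
    (conjPoly L).IsHomogeneous l :=
  hL.map _

lemma fischer_mul (f g h : MvPolynomial (Fin d) ℂ) :
    fischer f (g * h) = fischer (fischer f g) h := by
  rw [fischer, fischer, fischer, conjPoly, map_mul, mul_comm, diffOp_mul, Module.End.mul_apply]
  rfl

lemma coeff_zero_fischer (f g : MvPolynomial (Fin d) ℂ) :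
    coeff 0 (fischer f g)
      = ∑ α ∈ g.support,
          starRingEnd ℂ (g.coeff α) * (f.coeff α * ∏ j, ((α j).factorial : ℂ)) := by
  rw [fischer, diffOp_eq_sum_of_support_subset (conjPoly g) (support_map_subset _ g),
    LinearMap.sum_apply, coeff_sum]
  refine Finset.sum_congr rfl fun α _ => ?_
  rw [LinearMap.smul_apply, coeff_smul, coeff_zero_pderivPow, conjPoly, coeff_map, smul_eq_mul]

lemma coeff_zero_fischer_self_ne_zero {f : MvPolynomial (Fin d) ℂ} (hf : f ≠ 0) :
    coeff 0 (fischer f f) ≠ 0 := by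
  have hreal : coeff 0 (fischer f f) = ((∑ α ∈ f.support,
      Complex.normSq (f.coeff α) * ∏ j, ((α j).factorial : ℝ) : ℝ) : ℂ) := by
    rw [coeff_zero_fischer]
    push_cast
    refine Finset.sum_congr rfl fun α _ => ?_
    rw [← mul_assoc, mul_comm (starRingEnd ℂ _), Complex.mul_conj]
  rw [hreal, Complex.ofReal_ne_zero]
  refine (Finset.sum_pos (fun α hα => mul_pos (Complex.normSq_pos.mpr (mem_support_iff.mp hα))
    (Finset.prod_pos fun j _ => by exact_mod_cast Nat.factorial_pos _))
    (support_nonempty.mpr hf)).ne'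

lemma fischer_mul_self_ne_zero {L h : MvPolynomial (Fin d) ℂ} (hL : L ≠ 0) (hh : h ≠ 0) :
    fischer (L * h) L ≠ 0 := by
  intro hzero
  apply coeff_zero_fischer_self_ne_zero (mul_ne_zero hL hh)
  rw [fischer_mul, hzero, fischer, map_zero, coeff_zero]

end Fischer

section Complement

variable {d l : ℕ} {L q : MvPolynomial (Fin d) ℂ}

lemma eq_zero_of_fischer_mul_eq_zero (hL0 : L ≠ 0) (hL : L.IsHomogeneous l)
    (hq : homogeneousComponent q.totalDegree q = L) {c : MvPolynomial (Fin d) ℂ}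
    (hc : fischer (q * c) L = 0) : c = 0 := by
  by_contra hc0
  have hql := totalDegree_eq_of_homogeneousComponent_totalDegree_eq hL0 hL hq
  have htop : homogeneousComponent (c.totalDegree + l) (q * c)
      = L * homogeneousComponent c.totalDegree c := by
    rw [add_comm, ← hql, homogeneousComponent_add_mul_of_totalDegree_le le_rfl le_rfl, hq]
  apply fischer_mul_self_ne_zero hL0 (homogeneousComponent_totalDegree_ne_zero hc0)
  rw [← htop, fischer, ← homogeneousComponent_diffOp hL.conjPoly, ← fischer, hc, map_zero]

lemma exists_fischer_mul_eq (hL0 : L ≠ 0) (hL : L.IsHomogeneous l)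
    (hq : homogeneousComponent q.totalDegree q = L) (f : MvPolynomial (Fin d) ℂ) :
    ∃ c, fischer (q * c) L = fischer f L := by
  have hql := totalDegree_eq_of_homogeneousComponent_totalDegree_eq hL0 hL hq
  set P := restrictTotalDegree (Fin d) ℂ f.totalDegree
  have hmaps : ∀ c ∈ P, fischer (q * c) L ∈ P := fun c hc => by
    rw [mem_restrictTotalDegree] at hc ⊢
    refine totalDegree_diffOp_le hL.conjPoly ((totalDegree_mul q c).trans ?_)
    omega
  let T : P →ₗ[ℂ] P := ((diffOp (conjPoly L)) ∘ₗ LinearMap.mulLeft ℂ q).restrict hmaps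
  have hT : Function.Injective T := by
    rw [injective_iff_map_eq_zero]
    exact fun c hc => Subtype.ext (eq_zero_of_fischer_mul_eq_zero hL0 hL hq
      (congrArg Subtype.val hc))
  have hf : fischer f L ∈ P := by
    rw [mem_restrictTotalDegree]
    exact totalDegree_diffOp_le hL.conjPoly (Nat.le_add_right _ _)
  obtain ⟨c, hc⟩ := LinearMap.injective_iff_surjective.mp hT ⟨_, hf⟩
  exact ⟨c, congrArg Subtype.val hc⟩

theorem isCompl_ker_diffOp_conjPoly_span (hL0 : L ≠ 0) (hL : L.IsHomogeneous l)
    (hq : homogeneousComponent q.totalDegree q = L) :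
    IsCompl (LinearMap.ker (diffOp (conjPoly L))) ((Ideal.span {q}).restrictScalars ℂ) := by
  constructor
  · refine Submodule.disjoint_def.mpr fun f hker hspan => ?_
    obtain ⟨c, rfl⟩ := Ideal.mem_span_singleton.mp hspan
    rw [eq_zero_of_fischer_mul_eq_zero hL0 hL hq hker, mul_zero]
  · refine codisjoint_iff.mpr (Submodule.eq_top_iff'.mpr fun f => ?_)
    obtain ⟨c, hc⟩ := exists_fischer_mul_eq hL0 hL hq f
    have hker : f - q * c ∈ LinearMap.ker (diffOp (conjPoly L)) := by
      rw [LinearMap.mem_ker, map_sub, ← fischer, ← fischer, hc, sub_self]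
    have hspan : q * c ∈ (Ideal.span {q}).restrictScalars ℂ :=
      Ideal.mem_span_singleton.mpr (dvd_mul_right q c)
    simpa only [sub_add_cancel] using Submodule.add_mem_sup hker hspan

end Complement

lemma isHomogeneous_sum_X_sq {σ R : Type*} [CommSemiring R] [Fintype σ] :
    (∑ j : σ, (X j : MvPolynomial σ R) ^ 2).IsHomogeneous 2 :=
  IsHomogeneous.sum _ _ _ fun j _ => isHomogeneous_X_pow j 2

lemma conjPoly_sum_X_sq {d : ℕ} :
    conjPoly (∑ j : Fin d, (X j : MvPolynomial (Fin d) ℂ) ^ 2) = ∑ j : Fin d, X j ^ 2 := by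
  simp only [conjPoly, map_sum, map_pow, map_X]

theorem pde_solutions_have_ideal_complement {d : ℕ} :
    (∀ (l : ℕ) (L : MvPolynomial (Fin d) ℂ), L ≠ 0 → L.IsHomogeneous l →
      ∀ q : MvPolynomial (Fin d) ℂ, homogeneousComponent q.totalDegree q = L →
        IsCompl (LinearMap.ker (diffOp (conjPoly L))) ((Ideal.span {q}).restrictScalars ℂ)) ∧
    IsCompl (LinearMap.ker (diffOp (∑ j : Fin d, (X j : MvPolynomial (Fin d) ℂ) ^ 2)))
      ((Ideal.span {∑ j : Fin d, (X j : MvPolynomial (Fin d) ℂ) ^ 2}).restrictScalars ℂ) := by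
  refine ⟨fun l L hL0 hL q hq => isCompl_ker_diffOp_conjPoly_span hL0 hL hq, ?_⟩
  set Q := ∑ j : Fin d, (X j : MvPolynomial (Fin d) ℂ) ^ 2 with hQ
  by_cases hQ0 : Q = 0
  · rw [hQ0, Ideal.span_singleton_eq_bot.mpr rfl, Submodule.restrictScalars_bot]
    rw [diffOp_zero, LinearMap.ker_zero]
    exact isCompl_top_bot
  · have hhom : Q.IsHomogeneous 2 := isHomogeneous_sum_X_sq
    have htop : homogeneousComponent Q.totalDegree Q = Q := by
      rw [hhom.totalDegree hQ0, homogeneousComponent_eq_self hhom]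
    simpa only [hQ, conjPoly_sum_X_sq] using isCompl_ker_diffOp_conjPoly_span hQ0 hhom htop
end
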